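/- In S = k[x₀,…,x₅], let Q₀,…,Q₄ be the 4×4 Pfaffians of the 5×5 skew-symmetric matrix with upper-triangular entries row by row: (−x₀+x₁, −x₁, x₁−x₅, x₅; −x₂, −x₅, x₅; x₂, −x₃; x₄). Then the linear syzygy x₅·(Q₀ + Q₁) − x₃·Q₂ + x₄·Q₃ = 0 holds, and the ideal (Q₀+Q₁, Q₂, Q₃) equals the ideal of 2×2 minors of the matrix with rows (x₀−x₁, −x₁+x₂, x₁) and (x₅, x₃, −x₄). -/

import Mathlib

open MvPolynomial

variable (k : Type*) [Field k]

/-- The Pfaffian of a 4×4 skew-symmetric matrix `(a_{ij})`: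
`a₁₂a₃₄ − a₁₃a₂₄ + a₁₄a₂₃`. -/
def pf4 {R : Type*} [CommRing R] (A : Matrix (Fin 4) (Fin 4) R) : R :=
  A 0 1 * A 2 3 - A 0 2 * A 1 3 + A 0 3 * A 1 2

/-- The 5×5 skew-symmetric matrix of linear forms defining the quintic del Pezzo
surface in `ℙ⁵`, with upper-triangular entries as displayed in the paper. -/
noncomputable def Mdp : Matrix (Fin 5) (Fin 5) (MvPolynomial (Fin 6) k) :=
  ![![0, -X 0 + X 1, -X 1, X 1 - X 5, X 5],
    ![X 0 - X 1, 0, -X 2, -X 5, X 5],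
    ![X 1, X 2, 0, X 2, -X 3],
    ![-X 1 + X 5, X 5, -X 2, 0, X 4],
    ![-X 5, -X 5, X 3, -X 4, 0]]

/-- The signed 4×4 Pfaffians `Q₀,…,Q₄` of `Mdp` (with the standard signs, so that
`(Q₀,…,Q₄)` is in the kernel of `Mdp`). -/
noncomputable def Qdp (i : Fin 5) : MvPolynomial (Fin 6) k :=
  (-1 : MvPolynomial (Fin 6) k) ^ (i : ℕ) *
    pf4 ((Mdp k).submatrix i.succAbove i.succAbove)


lemma v3dp : ((3:Fin 5):Nat) = 3 := rfl
lemma v4dp : ((4:Fin 5):Nat) = 4 := rfl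

lemma sA00 : (0:Fin 5).succAbove 0 = 1 := rfl
lemma sA01 : (0:Fin 5).succAbove 1 = 2 := rfl
lemma sA02 : (0:Fin 5).succAbove 2 = 3 := rfl
lemma sA03 : (0:Fin 5).succAbove 3 = 4 := rfl
lemma sA10 : (1:Fin 5).succAbove 0 = 0 := rfl
lemma sA11 : (1:Fin 5).succAbove 1 = 2 := rfl
lemma sA12 : (1:Fin 5).succAbove 2 = 3 := rfl
lemma sA13 : (1:Fin 5).succAbove 3 = 4 := rfl
lemma sA20 : (2:Fin 5).succAbove 0 = 0 := rfl
lemma sA21 : (2:Fin 5).succAbove 1 = 1 := rfl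
lemma sA22 : (2:Fin 5).succAbove 2 = 3 := rfl
lemma sA23 : (2:Fin 5).succAbove 3 = 4 := rfl
lemma sA30 : (3:Fin 5).succAbove 0 = 0 := rfl
lemma sA31 : (3:Fin 5).succAbove 1 = 1 := rfl
lemma sA32 : (3:Fin 5).succAbove 2 = 2 := rfl
lemma sA33 : (3:Fin 5).succAbove 3 = 4 := rfl
lemma sA40 : (4:Fin 5).succAbove 0 = 0 := rfl
lemma sA41 : (4:Fin 5).succAbove 1 = 1 := rfl
lemma sA42 : (4:Fin 5).succAbove 2 = 2 := rfl
lemma sA43 : (4:Fin 5).succAbove 3 = 3 := rfl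


lemma hQ0 : Qdp k 0 = - (X 3 * X 5) + X 2 * X 5 - X 2 * X 4 := by
  simp [Qdp, pf4, Matrix.submatrix_apply, sA00,sA01,sA02,sA03,sA10,sA11,sA12,sA13,sA20,sA21,sA22,sA23,sA30,sA31,sA32,sA33,sA40,sA41,sA42,sA43,v3dp,v4dp]; simp [Mdp]; ring

lemma hQ1 : Qdp k 1 = X 3 * X 5 - X 2 * X 5 + X 1 * X 4 - X 1 * X 3 := by
  simp [Qdp, pf4, Matrix.submatrix_apply, sA00,sA01,sA02,sA03,sA10,sA11,sA12,sA13,sA20,sA21,sA22,sA23,sA30,sA31,sA32,sA33,sA40,sA41,sA42,sA43,v3dp,v4dp]; simp [Mdp]; ring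

lemma hQ2 : Qdp k 2 = - (X 1 * X 5) + X 1 * X 4 - X 0 * X 4 := by
  simp [Qdp, pf4, Matrix.submatrix_apply, sA00,sA01,sA02,sA03,sA10,sA11,sA12,sA13,sA20,sA21,sA22,sA23,sA30,sA31,sA32,sA33,sA40,sA41,sA42,sA43,v3dp,v4dp]; simp [Mdp]; ring

lemma hQ3 : Qdp k 3 = X 2 * X 5 - X 1 * X 5 + X 1 * X 3 - X 0 * X 3 := by
  simp [Qdp, pf4, Matrix.submatrix_apply, sA00,sA01,sA02,sA03,sA10,sA11,sA12,sA13,sA20,sA21,sA22,sA23,sA30,sA31,sA32,sA33,sA40,sA41,sA42,sA43,v3dp,v4dp]; simp [Mdp]; ring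

lemma hQ4 : Qdp k 4 = X 2 * X 5 - X 1 * X 5 - X 0 * X 2 := by
  simp [Qdp, pf4, Matrix.submatrix_apply, sA00,sA01,sA02,sA03,sA10,sA11,sA12,sA13,sA20,sA21,sA22,sA23,sA30,sA31,sA32,sA33,sA40,sA41,sA42,sA43,v3dp,v4dp]; simp [Mdp]; ring

lemma span_swap_neg {R : Type*} [CommRing R] (a b c : R) :
    Ideal.span {a, b, -c} = Ideal.span {c, b, a} := by
  apply le_antisymm <;> rw [Ideal.span_le] <;> intro x hx <;>
    simp only [Set.mem_insert_iff, Set.mem_singleton_iff] at hx <;>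
    rcases hx with h | h | h <;> rw [h]
  · exact Ideal.subset_span (by simp)
  · exact Ideal.subset_span (by simp)
  · exact neg_mem (Ideal.subset_span (by simp))
  · rw [show c = -(-c) by ring]
    exact neg_mem (Ideal.subset_span (by simp))
  · exact Ideal.subset_span (by simp)
  · exact Ideal.subset_span (by simp)

theorem delPezzo_quintic_syzygy_scheme :
    (∀ i, ∑ j, Mdp k i j * Qdp k j = 0) ∧
    X 5 * (Qdp k 0 + Qdp k 1) - X 3 * Qdp k 2 + X 4 * Qdp k 3 = 0 ∧
    Ideal.span {Qdp k 0 + Qdp k 1, Qdp k 2, Qdp k 3}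
      = Ideal.span {(X 0 - X 1) * X 3 - (-X 1 + X 2) * X 5,
          (X 0 - X 1) * (-X 4) - X 1 * X 5,
          (-X 1 + X 2) * (-X 4) - X 1 * X 3} := by
  refine ⟨?_, ?_, ?_⟩
  · intro i
    fin_cases i <;>
      · simp only [Fin.sum_univ_five, hQ0, hQ1, hQ2, hQ3, hQ4]
        simp [Mdp]
        ring
  · rw [hQ0, hQ1, hQ2, hQ3]; ring
  · have h1 : Qdp k 0 + Qdp k 1 = (-X 1 + X 2) * (-X 4) - X 1 * X 3 := by
      rw [hQ0, hQ1]; ring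
    have h2 : Qdp k 2 = (X 0 - X 1) * (-X 4) - X 1 * X 5 := by
      rw [hQ2]; ring
    have h3 : Qdp k 3 = -((X 0 - X 1) * X 3 - (-X 1 + X 2) * X 5) := by
      rw [hQ3]; ring
    rw [h1, h2, h3,
      span_swap_neg ((-X 1 + X 2) * (-X 4) - X 1 * X 3 : MvPolynomial (Fin 6) k)
        ((X 0 - X 1) * (-X 4) - X 1 * X 5) ((X 0 - X 1) * X 3 - (-X 1 + X 2) * X 5)]
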